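/- Suppose the potential outcomes satisfy the additivity condition: Y_t(w', w^s) − Y_t(w, w^s) = Y_t(w', w^{s'}) − Y_t(w, w^{s'}) for all primary assignments w, w' and simultaneous assignments w^s, w^{s'}. Define δ^simul_t(W) = E_{W^s}[Y_t(W, W^s) − Y_t(W, 0)]. Then δ^simul_t(W) does not depend on W; in particular, for any intervals m, the imbalance Φ^simul_t = E_{W^{(−m)}}[δ^simul_t(W^{(−m)}, W^(m)=1)] − E_{W^{(−m)}}[δ^simul_t(W^{(−m)}, W^(m)=0)] is zero, and hence the simultaneous-intervention bias ∑_m ∫_{I_m} Φ^simul_t f(t) dt of the HT estimator vanishes. -/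
import Mathlib

open MeasureTheory

/-- Under additivity of intervention effects, the expected simultaneous-intervention
effect `δ^simul_t(w) = E_{W^s}[Y_t(w, W^s) − Y_t(w, 0)]` does not depend on the primary
assignment `w`; in particular the imbalance `Φ^simul_t` between `W^(m) = 1` and
`W^(m) = 0` vanishes for every interval `m`, and hence the simultaneous-intervention
bias `∑ₘ ∫_{Iₘ} Φ^simul_t f(t) dt` of the HT estimator vanishes. -/
theorem statement11 {𝒮 : Type*} [MeasurableSpace 𝒮] (ν : Measure 𝒮)
    [IsProbabilityMeasure ν] (zeroS : 𝒮)
    (M : ℕ) (ι : ℕ → ℝ) (f : ℝ → ℝ)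
    -- potential outcomes, indexed by time, primary interval assignments, and the
    -- simultaneous assignment
    (Y : ℝ → (Fin M → Bool) → 𝒮 → ℝ)
    (hY_int : ∀ τ w, Integrable (fun s => Y τ w s) ν)
    -- additivity of intervention effects
    (hadd : ∀ τ : ℝ, ∀ w w' : Fin M → Bool, ∀ s s' : 𝒮,
      Y τ w' s - Y τ w s = Y τ w' s' - Y τ w s')
    -- the design distribution of the primary assignments of the other intervals
    {Ω : Type*} {mΩ : MeasurableSpace Ω} (μ : Measure Ω) [IsProbabilityMeasure μ]
    (W : Ω → Fin M → Bool) :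
    (∀ τ : ℝ, ∀ w w' : Fin M → Bool,
        (∫ s, (Y τ w s - Y τ w zeroS) ∂ν) = ∫ s, (Y τ w' s - Y τ w' zeroS) ∂ν) ∧
      (∀ (m : Fin M) (τ : ℝ),
        (∫ ω, (∫ s, (Y τ (Function.update (W ω) m true) s
            - Y τ (Function.update (W ω) m true) zeroS) ∂ν) ∂μ)
          - (∫ ω, (∫ s, (Y τ (Function.update (W ω) m false) s
            - Y τ (Function.update (W ω) m false) zeroS) ∂ν) ∂μ) = 0) ∧
      (∑ m : Fin M, ∫ τ in Set.Ioc (ι m) (ι (m + 1)),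
          ((∫ ω, (∫ s, (Y τ (Function.update (W ω) m true) s
              - Y τ (Function.update (W ω) m true) zeroS) ∂ν) ∂μ)
            - (∫ ω, (∫ s, (Y τ (Function.update (W ω) m false) s
              - Y τ (Function.update (W ω) m false) zeroS) ∂ν) ∂μ)) * f τ) = 0 := by
  have hkey : ∀ τ : ℝ, ∀ w w' : Fin M → Bool,
      (∫ s, (Y τ w s - Y τ w zeroS) ∂ν) = ∫ s, (Y τ w' s - Y τ w' zeroS) ∂ν := by
    intro τ w w'
    refine integral_congr_ae (Filter.Eventually.of_forall fun s => ?_)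
    have h := hadd τ w w' s zeroS
    show Y τ w s - Y τ w zeroS = Y τ w' s - Y τ w' zeroS
    linarith
  have hphi : ∀ (m : Fin M) (τ : ℝ),
      (∫ ω, (∫ s, (Y τ (Function.update (W ω) m true) s
          - Y τ (Function.update (W ω) m true) zeroS) ∂ν) ∂μ)
        - (∫ ω, (∫ s, (Y τ (Function.update (W ω) m false) s
          - Y τ (Function.update (W ω) m false) zeroS) ∂ν) ∂μ) = 0 := by
    intro m τ
    have : (fun ω => ∫ s, (Y τ (Function.update (W ω) m true) s
          - Y τ (Function.update (W ω) m true) zeroS) ∂ν)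
        = fun ω => ∫ s, (Y τ (Function.update (W ω) m false) s
          - Y τ (Function.update (W ω) m false) zeroS) ∂ν := by
      funext ω; exact hkey τ _ _
    rw [this, sub_self]
  refine ⟨hkey, hphi, ?_⟩
  refine Finset.sum_eq_zero fun m _ => ?_
  have : ∀ τ : ℝ,
      ((∫ ω, (∫ s, (Y τ (Function.update (W ω) m true) s
          - Y τ (Function.update (W ω) m true) zeroS) ∂ν) ∂μ)
        - (∫ ω, (∫ s, (Y τ (Function.update (W ω) m false) s
          - Y τ (Function.update (W ω) m false) zeroS) ∂ν) ∂μ)) * f τ = 0 := by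
    intro τ; rw [hphi m τ, zero_mul]
  simp only [this, integral_zero]
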